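/- The function φ : (0,∞) → ℝ defined by φ(t) = (1/(e^t − 1) − 1/t + 1/2)/t is strictly decreasing on (0,∞); that is, for all 0 < t₁ < t₂ one has φ(t₁) > φ(t₂). -/

import Mathlib

open Real

/-- `φ(t) = (1/(eᵗ − 1) − 1/t + 1/2)/t`. -/
noncomputable def binetPhi (t : ℝ) : ℝ :=
  (1 / (Real.exp t - 1) - 1 / t + 1 / 2) / t

/-- Basic tool: a function vanishing at 0 whose derivative is positive on `(0,∞)`
is positive on `(0,∞)`. -/
private lemma pos_of_deriv_pos (f f' : ℝ → ℝ) (h0 : f 0 = 0)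
    (hd : ∀ x : ℝ, HasDerivAt f (f' x) x) (hp : ∀ x : ℝ, 0 < x → 0 < f' x) :
    ∀ x : ℝ, 0 < x → 0 < f x := by
  intro x hx
  have hmono : StrictMonoOn f (Set.Ici 0) := by
    apply strictMonoOn_of_deriv_pos (convex_Ici 0)
    · exact fun y _ => (hd y).continuousAt.continuousWithinAt
    · intro y hy
      rw [interior_Ici] at hy
      rw [(hd y).deriv]
      exact hp y hy
  have h := hmono Set.self_mem_Ici (Set.mem_Ici.2 hx.le) hx
  rw [h0] at h
  exact h

private lemma Q2_pos : ∀ t : ℝ, 0 < t → 0 < (2*t-2) * Real.exp t + 2 := by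
  apply pos_of_deriv_pos _ (fun t => 2 * t * Real.exp t)
  · simp
  · intro x
    have h := ((hasDerivAt_id x).const_mul 2 |>.sub_const 2).mul (Real.hasDerivAt_exp x)
    have h2 := h.add_const 2
    refine h2.congr_deriv ?_
    try simp only [id_eq]
    ring
  · intro x hx
    positivity

private lemma Q1_pos : ∀ t : ℝ, 0 < t → 0 < (2*t-4) * Real.exp t + 2*t + 4 := by
  apply pos_of_deriv_pos _ (fun t => (2*t-2) * Real.exp t + 2)
  · simp
  · intro x
    have h := ((hasDerivAt_id x).const_mul 2 |>.sub_const 4).mul (Real.hasDerivAt_exp x)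
    have h2 := (h.add ((hasDerivAt_id x).const_mul 2)).add_const 4
    refine h2.congr_deriv ?_
    try simp only [id_eq]
    ring
  · exact Q2_pos

private lemma Q0_pos : ∀ t : ℝ, 0 < t → 0 < (2*t-6) * Real.exp t + t^2 + 4*t + 6 := by
  apply pos_of_deriv_pos _ (fun t => (2*t-4) * Real.exp t + 2*t + 4)
  · simp
  · intro x
    have h := ((hasDerivAt_id x).const_mul 2 |>.sub_const 6).mul (Real.hasDerivAt_exp x)
    have hp : HasDerivAt (fun y : ℝ => y^2) (2*x) x := by
      simpa using (hasDerivAt_id x).fun_pow 2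
    have h2 := ((h.add hp).add ((hasDerivAt_id x).const_mul 4)).add_const 6
    refine h2.congr_deriv ?_
    try simp only [id_eq]
    ring
  · exact Q1_pos

private lemma P1_pos : ∀ t : ℝ, 0 < t →
    0 < (t - 7/2) * (Real.exp t)^2 + (t^2 + 2*t + 4) * Real.exp t - 1/2 := by
  apply pos_of_deriv_pos _
      (fun t => Real.exp t * ((2*t-6) * Real.exp t + t^2 + 4*t + 6))
  · norm_num
  · intro x
    have he := Real.hasDerivAt_exp x
    have he2 : HasDerivAt (fun y : ℝ => (Real.exp y)^2) (2 * Real.exp x * Real.exp x) x := by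
      simpa using he.fun_pow 2
    have hx2 : HasDerivAt (fun y : ℝ => y^2) (2*x) x := by
      simpa using (hasDerivAt_id x).fun_pow 2
    have hpoly : HasDerivAt (fun y : ℝ => y^2 + 2*y + 4) (2*x + 2) x := by
      have h := (hx2.add ((hasDerivAt_id x).const_mul 2)).add_const 4
      refine h.congr_deriv ?_
      ring
    have hlin : HasDerivAt (fun y : ℝ => y - 7/2) 1 x := (hasDerivAt_id x).sub_const _
    have h := ((hlin.mul he2).add (hpoly.mul he)).sub_const (1/2 : ℝ)
    refine h.congr_deriv ?_
    try simp only [id_eq]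
    ring
  · intro x hx
    exact mul_pos (Real.exp_pos x) (Q0_pos x hx)

private lemma P_pos : ∀ t : ℝ, 0 < t →
    0 < -2*(Real.exp t)^2 + (t/2)*(Real.exp t)^2 + t^2*Real.exp t + 4*Real.exp t - t/2 - 2 := by
  apply pos_of_deriv_pos _
      (fun t => (t - 7/2) * (Real.exp t)^2 + (t^2 + 2*t + 4) * Real.exp t - 1/2)
  · norm_num
  · intro x
    have he := Real.hasDerivAt_exp x
    have he2 : HasDerivAt (fun y : ℝ => (Real.exp y)^2) (2 * Real.exp x * Real.exp x) x := by
      simpa using he.fun_pow 2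
    have hx2 : HasDerivAt (fun y : ℝ => y^2) (2*x) x := by
      simpa using (hasDerivAt_id x).fun_pow 2
    have h1 : HasDerivAt (fun y : ℝ => -2*(Real.exp y)^2)
        (-2 * (2 * Real.exp x * Real.exp x)) x := he2.const_mul (-2)
    have hhalf : HasDerivAt (fun y : ℝ => y/2) (1/2) x := by
      simpa using (hasDerivAt_id x).div_const 2
    have h2 : HasDerivAt (fun y : ℝ => (y/2)*(Real.exp y)^2)
        ((1/2) * (Real.exp x)^2 + (x/2) * (2 * Real.exp x * Real.exp x)) x :=
      hhalf.mul he2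
    have h3 : HasDerivAt (fun y : ℝ => y^2 * Real.exp y)
        (2*x * Real.exp x + x^2 * Real.exp x) x := hx2.mul he
    have h4 : HasDerivAt (fun y : ℝ => 4 * Real.exp y) (4 * Real.exp x) x := he.const_mul 4
    have h := ((((h1.add h2).add h3).add h4).sub hhalf).sub_const 2
    refine h.congr_deriv ?_
    try simp only [id_eq]
    ring
  · exact P1_pos

private lemma binetPhi_hasDerivAt (t : ℝ) (ht : 0 < t) :
    HasDerivAt binetPhi
      (((-Real.exp t / (Real.exp t - 1)^2 - -(t^2)⁻¹) * t -
        ((Real.exp t - 1)⁻¹ - t⁻¹ + 1/2) * 1) / t^2) t := by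
  have hE1 : 0 < Real.exp t - 1 := by
    have h1 : (1:ℝ) < Real.exp t := by
      calc (1:ℝ) = Real.exp 0 := by simp
        _ < Real.exp t := Real.exp_lt_exp.2 ht
    linarith
  have h1 : HasDerivAt (fun y : ℝ => (Real.exp y - 1)⁻¹)
      (-Real.exp t / (Real.exp t - 1)^2) t :=
    ((Real.hasDerivAt_exp t).sub_const 1).inv hE1.ne'
  have h2 : HasDerivAt (fun y : ℝ => y⁻¹) (-(t^2)⁻¹) t := hasDerivAt_inv ht.ne'
  have hc := (h1.sub h2).add_const (1/2 : ℝ)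
  have hd := hc.div (hasDerivAt_id t) ht.ne'
  have heq : binetPhi = fun y : ℝ => ((Real.exp y - 1)⁻¹ - y⁻¹ + 1/2) / y := by
    funext y
    simp [binetPhi, one_div]
  rw [heq]
  simpa using hc.fun_div (hasDerivAt_id t) ht.ne'

private lemma binetPhi_deriv_neg (t : ℝ) (ht : 0 < t) : deriv binetPhi t < 0 := by
  have hE1 : 0 < Real.exp t - 1 := by
    have h1 : (1:ℝ) < Real.exp t := by
      calc (1:ℝ) = Real.exp 0 := by simp
        _ < Real.exp t := Real.exp_lt_exp.2 ht
    linarith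
  rw [(binetPhi_hasDerivAt t ht).deriv]
  apply div_neg_of_neg_of_pos _ (by positivity)
  set E := Real.exp t with hE
  have hne : E - 1 ≠ 0 := hE1.ne'
  have hkey : ((-E / (E - 1)^2 - -(t^2)⁻¹) * t - ((E - 1)⁻¹ - t⁻¹ + 1/2) * 1) *
      (t * (E - 1)^2) =
      -(-2*E^2 + (t/2)*E^2 + t^2*E + 4*E - t/2 - 2) := by
    field_simp
    ring
  have hP := P_pos t ht
  have hA : 0 < t * (E - 1)^2 := by positivity
  nlinarith [hkey, hP, hA]

/-- `φ` is strictly decreasing on `(0, ∞)`. -/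
theorem binetPhi_strictAnti :
    ∀ t₁ t₂ : ℝ, 0 < t₁ → t₁ < t₂ → binetPhi t₁ > binetPhi t₂ := by
  intro t₁ t₂ h1 h12
  have hanti : StrictAntiOn binetPhi (Set.Ioi 0) := by
    apply strictAntiOn_of_deriv_neg (convex_Ioi 0)
    · exact fun y hy => (binetPhi_hasDerivAt y hy).continuousAt.continuousWithinAt
    · intro y hy
      rw [interior_Ioi] at hy
      exact binetPhi_deriv_neg y hy
  exact hanti (Set.mem_Ioi.2 h1) (Set.mem_Ioi.2 (h1.trans h12)) h12
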